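/- For n ≥ 2, the path P_n satisfies J(P_n) = 2. -/

import Mathlib

/-!
The parity colouring of `P_n` is proper, and since no vertex of `P_n` is isolated every closed
neighbourhood sees both colours. Conversely, a J-colouring with `k` colours shows all `k` colours
in the closed neighbourhood of every vertex `v`, so `k ≤ deg v + 1`; an end vertex of the path
has degree `1`.
-/

open SimpleGraph

/-- A proper colouring of `G` with `k` colours in which every vertex's closed
neighbourhood meets every colour class (a J-colouring). -/
def IsJCol {V : Type*} (G : SimpleGraph V) {k : ℕ} (c : V → Fin k) : Prop :=
  (∀ u v, G.Adj u v → c u ≠ c v) ∧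
  (∀ v : V, ∀ i : Fin k, ∃ u, (u = v ∨ G.Adj v u) ∧ c u = i)

/-- `G` admits a J-colouring with `k` colours. -/
def HasJCol {V : Type*} (G : SimpleGraph V) (k : ℕ) : Prop :=
  ∃ c : V → Fin k, IsJCol G c

/-- The J-chromatic number: the maximum number of colours in a J-colouring. -/
noncomputable def Jnum {V : Type*} (G : SimpleGraph V) : ℕ :=
  sSup {k | HasJCol G k}

/-- A proper colouring in which every internal vertex (degree ≥ 2) has its closed
neighbourhood meeting every colour class (a J*-colouring). -/
def IsJStarCol {V : Type*} (G : SimpleGraph V) {k : ℕ} (c : V → Fin k) : Prop :=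
  (∀ u v, G.Adj u v → c u ≠ c v) ∧
  (∀ v : V, (∃ a b, a ≠ b ∧ G.Adj v a ∧ G.Adj v b) →
    ∀ i : Fin k, ∃ u, (u = v ∨ G.Adj v u) ∧ c u = i)

/-- `G` admits a J*-colouring with `k` colours. -/
def HasJStarCol {V : Type*} (G : SimpleGraph V) (k : ℕ) : Prop :=
  ∃ c : V → Fin k, IsJStarCol G c

/-- The modified J-chromatic number. -/
noncomputable def JStarNum {V : Type*} (G : SimpleGraph V) : ℕ :=
  sSup {k | HasJStarCol G k}

section JColouring

variable {V : Type*} {G : SimpleGraph V}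

theorem isJCol_of_coloring_fin_two (C : G.Coloring (Fin 2)) (hG : ∀ v, ∃ u, G.Adj v u) :
    IsJCol G C := by
  refine ⟨fun u v huv => C.valid huv, fun v i => ?_⟩
  by_cases hvi : C v = i
  · exact ⟨v, Or.inl rfl, hvi⟩
  · obtain ⟨u, hvu⟩ := hG v
    have huv : C u ≠ C v := C.valid hvu.symm
    exact ⟨u, Or.inr hvu, by omega⟩

theorem hasJCol_two_of_colorable (hG2 : G.Colorable 2) (hG : ∀ v, ∃ u, G.Adj v u) :
    HasJCol G 2 :=
  ⟨_, isJCol_of_coloring_fin_two hG2.some hG⟩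

theorem IsJCol.le_degree_add_one {k : ℕ} {c : V → Fin k} (hc : IsJCol G c) (v : V)
    [Fintype (G.neighborSet v)] : k ≤ G.degree v + 1 := by
  classical
  have hsurj : Finset.univ ⊆ (insert v (G.neighborFinset v)).image c := by
    intro i _
    obtain ⟨u, hu, rfl⟩ := hc.2 v i
    refine Finset.mem_image_of_mem c ?_
    rcases hu with rfl | hvu
    · exact Finset.mem_insert_self u _
    · exact Finset.mem_insert_of_mem ((G.mem_neighborFinset v u).2 hvu)
  calc k = (Finset.univ : Finset (Fin k)).card := (Finset.card_fin k).symm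
    _ ≤ ((insert v (G.neighborFinset v)).image c).card := Finset.card_le_card hsurj
    _ ≤ (insert v (G.neighborFinset v)).card := Finset.card_image_le
    _ ≤ G.degree v + 1 := by
      rw [← G.card_neighborFinset_eq_degree]
      exact Finset.card_insert_le _ _

theorem HasJCol.le_degree_add_one {k : ℕ} (hk : HasJCol G k) (v : V)
    [Fintype (G.neighborSet v)] : k ≤ G.degree v + 1 :=
  hk.choose_spec.le_degree_add_one v

end JColouring

namespace SimpleGraph

theorem pathGraph_exists_adj {n : ℕ} (hn : 2 ≤ n) (v : Fin n) : ∃ u, (pathGraph n).Adj v u := by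
  simp only [pathGraph_adj]
  by_cases hv : v.val + 1 < n
  · exact ⟨⟨v.val + 1, hv⟩, Or.inl rfl⟩
  · exact ⟨⟨v.val - 1, by omega⟩, Or.inr (by simp only; omega)⟩

theorem pathGraph_degree_zero (n : ℕ) [Fintype ((pathGraph (n + 2)).neighborSet 0)] :
    (pathGraph (n + 2)).degree 0 = 1 := by
  rw [← card_neighborSet_eq_degree, Fintype.card_eq_one_iff]
  refine ⟨⟨1, by simp [pathGraph_adj]⟩, fun ⟨u, hu⟩ => ?_⟩
  simp only [mem_neighborSet, pathGraph_adj, Fin.val_zero] at hu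
  ext
  simp only [Fin.val_one]
  omega

end SimpleGraph

/-- For `n ≥ 2`, the path `P_n` satisfies `J(P_n) = 2`. -/
theorem path_Jnum (n : ℕ) (hn : 2 ≤ n) :
    HasJCol (SimpleGraph.pathGraph n) 2 ∧ Jnum (SimpleGraph.pathGraph n) = 2 := by
  have hcol : HasJCol (pathGraph n) 2 := by
    refine hasJCol_two_of_colorable ?_ (pathGraph_exists_adj hn)
    simpa using (pathGraph.bicoloring n).colorable
  refine ⟨hcol, IsGreatest.csSup_eq ⟨hcol, fun k hk => ?_⟩⟩
  obtain ⟨m, rfl⟩ := Nat.exists_eq_add_of_le' hn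
  classical
  simpa [pathGraph_degree_zero] using hk.le_degree_add_one 0
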